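/- arXiv:1409.2698 — 5 statements merged into one kernel-verified Lean document; each statement's English description precedes it below -/
import Mathlib

section
/- For positive integers k, j, l with 1 ≤ l ≤ 5, the number of partitions of j into exactly k parts each at most 5 is at least the number of partitions of j−l into exactly k−1 parts each at most 5. -/
/-- `p5 k j` is the number of partitions of `j` into exactly `k` parts,
each part at most `5`. -/
def p5 (k j : ℕ) : ℕ :=
  Fintype.card {P : Nat.Partition j // P.parts.card = k ∧ ∀ x ∈ P.parts, x ≤ 5}

theorem p5_mono (k j l : ℕ) (hk : 1 ≤ k) (hj : 1 ≤ j) (hl1 : 1 ≤ l) (hl5 : l ≤ 5) :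
    p5 (k - 1) (j - l) ≤ p5 k j := by
  rcases le_or_gt l j with hlj | hlj
  · refine Fintype.card_le_of_injective
      (fun P => ⟨⟨l ::ₘ P.1.parts, ?_, ?_⟩, ?_, ?_⟩) ?_
    · intro x hx
      rcases Multiset.mem_cons.1 hx with h | h
      · omega
      · exact P.1.parts_pos h
    · rw [Multiset.sum_cons, P.1.parts_sum]
      omega
    · rw [Multiset.card_cons, P.2.1]
      omega
    · intro x hx
      rcases Multiset.mem_cons.1 hx with h | h
      · omega
      · exact P.2.2 x h
    · intro a b hab
      have h1 : l ::ₘ a.1.parts = l ::ₘ b.1.parts := by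
        have := congrArg (fun x => x.1.parts) hab
        simpa using this
      have h2 : a.1.parts = b.1.parts := by
        exact (Multiset.cons_inj_right l).1 h1
      exact Subtype.ext (Nat.Partition.ext h2)
  · have hj0 : j - l = 0 := by omega
    refine Fintype.card_le_of_injective
      (fun P => ⟨⟨{j}, ?_, ?_⟩, ?_, ?_⟩) ?_
    · intro x hx
      simp only [Multiset.mem_singleton] at hx
      omega
    · simp
    · have hp : P.1.parts = 0 := by
        have := P.1.parts_sum
        by_contra h
        obtain ⟨x, hx⟩ := Multiset.exists_mem_of_ne_zero h
        have := P.1.parts_pos hx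
        have := Multiset.single_le_sum (fun y hy => Nat.zero_le y) x hx
        omega
      have := P.2.1
      rw [hp] at this
      simp only [Multiset.card_singleton]
      simp at this
      omega
    · intro x hx
      simp only [Multiset.mem_singleton] at hx
      omega
    · intro a b hab
      have ha : a.1.parts = 0 := by
        have := a.1.parts_sum
        by_contra h
        obtain ⟨x, hx⟩ := Multiset.exists_mem_of_ne_zero h
        have := a.1.parts_pos hx
        have := Multiset.single_le_sum (fun y hy => Nat.zero_le y) x hx
        omega
      have hb : b.1.parts = 0 := by
        have := b.1.parts_sum
        by_contra h
        obtain ⟨x, hx⟩ := Multiset.exists_mem_of_ne_zero h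
        have := b.1.parts_pos hx
        have := Multiset.single_le_sum (fun y hy => Nat.zero_le y) x hx
        omega
      exact Subtype.ext (Nat.Partition.ext (ha.trans hb.symm))
end

section
/- For each k ≥ 1, the number of simultaneous similarity classes of k-tuples of pairwise commuting 2×2 matrices over 𝔽_q equals (1,1)·B^k·(1,0)ᵀ, where B is the 2×2 matrix with rows (q,0) and (q²,q²). -/
/-- The set of `k`-tuples of pairwise commuting `2 × 2` matrices over `F`. -/
def CommTuple₂ (F : Type) [Field F] (k : ℕ) : Type :=
  {v : Fin k → Matrix (Fin 2) (Fin 2) F // ∀ i j, Commute (v i) (v j)}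

/-- Simultaneous conjugation: two commuting tuples are related if some
`g ∈ GL₂(F)` conjugates one to the other coordinatewise. -/
def simConj₂ (F : Type) [Field F] (k : ℕ) (v w : CommTuple₂ F k) : Prop :=
  ∃ g : GL (Fin 2) F, ∀ i, (g : Matrix (Fin 2) (Fin 2) F) * v.1 i *
    ((g⁻¹ : GL (Fin 2) F) : Matrix (Fin 2) (Fin 2) F) = w.1 i

namespace C2K
variable {F : Type} [Field F]

local notation "Mat" => Matrix (Fin 2) (Fin 2) F

def Cmat (t d : F) : Matrix (Fin 2) (Fin 2) F := !![0, -d; 1, t]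

lemma sq_eq (A : Mat) :
    A * A = (A 0 0 + A 1 1) • A - (A 0 0 * A 1 1 - A 0 1 * A 1 0) • (1 : Mat) := by
  ext i j
  fin_cases i <;> fin_cases j <;>
    simp [Matrix.mul_apply, Fin.sum_univ_two, Matrix.one_apply] <;> ring

lemma centralizer_Cmat (t d : F) (B : Mat) (h : B * Cmat t d = Cmat t d * B) :
    B = B 0 0 • (1 : Mat) + B 1 0 • Cmat t d := by
  have h00 := congrFun (congrFun h 0) 0
  have h01 := congrFun (congrFun h 0) 1
  have h10 := congrFun (congrFun h 1) 0
  have h11 := congrFun (congrFun h 1) 1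
  simp [Cmat, Matrix.mul_apply, Fin.sum_univ_two] at h00 h01 h10 h11
  ext i j
  fin_cases i <;> fin_cases j <;>
    simp [Cmat, Matrix.one_apply] <;>
    first
      | linear_combination h00
      | linear_combination h10

end C2K

namespace C2K
variable {F : Type} [Field F]
local notation "Mat" => Matrix (Fin 2) (Fin 2) F

lemma conj_of_mul_eq {A C M : Matrix (Fin 2) (Fin 2) F} (hM : IsUnit M)
    (h : A * M = M * C) : ∃ g : GL (Fin 2) F,
      (g : Matrix (Fin 2) (Fin 2) F) * A * ((g⁻¹ : GL (Fin 2) F) : Matrix (Fin 2) (Fin 2) F) = C := by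
  obtain ⟨u, rfl⟩ := hM
  refine ⟨u⁻¹, ?_⟩
  rw [inv_inv]
  show (↑(u⁻¹) : Matrix (Fin 2) (Fin 2) F) * A * (↑u : Matrix (Fin 2) (Fin 2) F) = C
  rw [mul_assoc, h, ← mul_assoc, Units.inv_mul, one_mul]

/-- any nonscalar 2x2 matrix is conjugate to the companion matrix of its char poly -/
lemma exists_conj_Cmat {A : Matrix (Fin 2) (Fin 2) F} (hA : ¬ ∃ c : F, A = c • 1) :
    ∃ g : GL (Fin 2) F,
      (g : Matrix (Fin 2) (Fin 2) F) * A * ((g⁻¹ : GL (Fin 2) F) : Matrix (Fin 2) (Fin 2) F) =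
        Cmat (A 0 0 + A 1 1) (A 0 0 * A 1 1 - A 0 1 * A 1 0) := by
  set t := A 0 0 + A 1 1 with ht
  set d := A 0 0 * A 1 1 - A 0 1 * A 1 0 with hd
  by_cases h10 : A 1 0 ≠ 0
  · apply conj_of_mul_eq (M := !![1, A 0 0; 0, A 1 0])
    · rw [Matrix.isUnit_iff_isUnit_det, Matrix.det_fin_two_of, isUnit_iff_ne_zero]
      simpa using h10
    · ext i j
      fin_cases i <;> fin_cases j <;>
        simp [Cmat, Matrix.mul_apply, Fin.sum_univ_two, ht, hd] <;> ring
  · push_neg at h10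
    by_cases h01 : A 0 1 ≠ 0
    · apply conj_of_mul_eq (M := !![0, A 0 1; 1, A 1 1])
      · rw [Matrix.isUnit_iff_isUnit_det, Matrix.det_fin_two_of, isUnit_iff_ne_zero]
        simpa using h01
      · ext i j
        fin_cases i <;> fin_cases j <;>
          simp [Cmat, Matrix.mul_apply, Fin.sum_univ_two, ht, hd, h10] <;> ring
    · push_neg at h01
      have hne : A 1 1 - A 0 0 ≠ 0 := by
        intro hc
        apply hA
        refine ⟨A 0 0, ?_⟩
        have h11 : A 1 1 = A 0 0 := sub_eq_zero.mp hc
        ext i j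
        fin_cases i <;> fin_cases j <;> simp_all [Matrix.one_apply]
      apply conj_of_mul_eq (M := !![1, A 0 0; 1, A 1 1])
      · rw [Matrix.isUnit_iff_isUnit_det, Matrix.det_fin_two_of, isUnit_iff_ne_zero]
        simpa using hne
      · ext i j
        fin_cases i <;> fin_cases j <;>
          simp [Cmat, Matrix.mul_apply, Fin.sum_univ_two, ht, hd, h10, h01] <;> ring

end C2K

namespace C2K
variable {F : Type} [Field F]

lemma comm_lin (M : Matrix (Fin 2) (Fin 2) F) (a b c d : F) :
    Commute (a • 1 + b • M) (c • 1 + d • M) := by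
  show _ * _ = _ * _
  simp only [add_mul, mul_add, smul_add, smul_mul_assoc, mul_smul_comm, smul_smul,
    mul_one, one_mul]
  rw [mul_comm a c, mul_comm a d, mul_comm b c, mul_comm b d]
  abel

variable (F) in
/-- parameter space for non-scalar commuting tuples -/
def XS (k : ℕ) : Type := (F × F) × (Fin k → F) × {b : Fin k → F // b ≠ 0}

variable (F) in
/-- the affine group `x ↦ αx + β` (with reversed multiplication) -/
@[ext] structure Aff : Type where
  α : F
  β : F
  hα : α ≠ 0

instance : Mul (Aff F) := ⟨fun g h => ⟨g.α * h.α, g.β * h.α + h.β, mul_ne_zero g.hα h.hα⟩⟩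
instance : One (Aff F) := ⟨⟨1, 0, one_ne_zero⟩⟩
instance : Inv (Aff F) := ⟨fun g => ⟨g.α⁻¹, -g.β * g.α⁻¹, inv_ne_zero g.hα⟩⟩

@[simp] lemma Aff.mul_α (g h : Aff F) : (g * h).α = g.α * h.α := rfl
@[simp] lemma Aff.mul_β (g h : Aff F) : (g * h).β = g.β * h.α + h.β := rfl
@[simp] lemma Aff.one_α : (1 : Aff F).α = 1 := rfl
@[simp] lemma Aff.one_β : (1 : Aff F).β = 0 := rfl
@[simp] lemma Aff.inv_α (g : Aff F) : (g⁻¹).α = g.α⁻¹ := rfl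
@[simp] lemma Aff.inv_β (g : Aff F) : (g⁻¹).β = -g.β * g.α⁻¹ := rfl

instance : Group (Aff F) where
  mul_assoc g h l := by ext <;> simp <;> ring
  one_mul g := by ext <;> simp
  mul_one g := by ext <;> simp
  inv_mul_cancel g := by
    have := g.hα
    ext <;> simp
    · exact inv_mul_cancel₀ g.hα
    · field_simp
      ring

instance (k : ℕ) : SMul (Aff F) (XS F k) :=
  ⟨fun g x => ((g.α⁻¹ * (x.1.1 - 2 * g.β), g.α⁻¹ ^ 2 * (x.1.2 - g.β * x.1.1 + g.β ^ 2)),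
    fun j => x.2.1 j + g.β * x.2.2.1 j,
    ⟨fun j => g.α * x.2.2.1 j, by
      intro hc
      apply x.2.2.2
      funext j
      have := congrFun hc j
      simp at this
      exact this.resolve_left g.hα⟩)⟩

@[simp] lemma smul_t {k : ℕ} (g : Aff F) (x : XS F k) :
    (g • x).1.1 = g.α⁻¹ * (x.1.1 - 2 * g.β) := rfl
@[simp] lemma smul_d {k : ℕ} (g : Aff F) (x : XS F k) :
    (g • x).1.2 = g.α⁻¹ ^ 2 * (x.1.2 - g.β * x.1.1 + g.β ^ 2) := rfl
@[simp] lemma smul_a {k : ℕ} (g : Aff F) (x : XS F k) (j : Fin k) :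
    (g • x).2.1 j = x.2.1 j + g.β * x.2.2.1 j := rfl
@[simp] lemma smul_b {k : ℕ} (g : Aff F) (x : XS F k) (j : Fin k) :
    (g • x).2.2.1 j = g.α * x.2.2.1 j := rfl

instance (k : ℕ) : MulAction (Aff F) (XS F k) where
  one_smul x := by
    refine Prod.ext (Prod.ext ?_ ?_) (Prod.ext ?_ (Subtype.ext ?_))
    · simp
    · simp
    · funext j; simp
    · funext j; simp
  mul_smul g h x := by
    have hg := g.hα
    have hh := h.hα
    refine Prod.ext (Prod.ext ?_ ?_) (Prod.ext ?_ (Subtype.ext ?_))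
    · simp only [smul_t, Aff.mul_α, Aff.mul_β]
      field_simp
      ring
    · simp only [smul_d, smul_t, Aff.mul_α, Aff.mul_β]
      field_simp
      ring
    · funext j; simp only [smul_a, smul_b, Aff.mul_β]; ring
    · funext j; simp only [smul_b, Aff.mul_α]; ring

end C2K

namespace C2K
variable {F : Type} [Field F]
local notation "Mat" => Matrix (Fin 2) (Fin 2) F

def Phi {k : ℕ} (x : XS F k) : CommTuple₂ F k :=
  ⟨fun j => x.2.1 j • 1 + x.2.2.1 j • Cmat x.1.1 x.1.2, fun _ _ => comm_lin _ _ _ _ _⟩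

def Psi {k : ℕ} (l : Fin k → F) : CommTuple₂ F k :=
  ⟨fun j => l j • 1, fun i j => ((Commute.one_right _).smul_left _).smul_right _⟩

lemma conj_conj (g h : GL (Fin 2) F) (A : Mat) :
    (↑g : Mat) * ((↑h : Mat) * A * (↑h⁻¹ : Mat)) * (↑g⁻¹ : Mat)
      = (↑(g * h) : Mat) * A * (↑(g * h)⁻¹ : Mat) := by
  simp [Units.val_mul, mul_assoc]

lemma conj_one (A : Mat) :
    (↑(1 : GL (Fin 2) F) : Mat) * A * (↑(1 : GL (Fin 2) F)⁻¹ : Mat) = A := by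
  simp

lemma conj_smul_one (g : GL (Fin 2) F) (c : F) :
    (↑g : Mat) * (c • 1) * (↑g⁻¹ : Mat) = c • (1 : Mat) := by
  rw [mul_smul_comm, mul_one, smul_mul_assoc, ← Units.val_mul, mul_inv_cancel, Units.val_one]

lemma conj_add (g : GL (Fin 2) F) (A B : Mat) :
    (↑g : Mat) * (A + B) * (↑g⁻¹ : Mat)
      = (↑g : Mat) * A * (↑g⁻¹ : Mat) + (↑g : Mat) * B * (↑g⁻¹ : Mat) := by
  noncomm_ring

lemma conj_smul (g : GL (Fin 2) F) (c : F) (A : Mat) :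
    (↑g : Mat) * (c • A) * (↑g⁻¹ : Mat) = c • ((↑g : Mat) * A * (↑g⁻¹ : Mat)) := by
  rw [mul_smul_comm, smul_mul_assoc]

lemma simConj_equiv (k : ℕ) : Equivalence (simConj₂ F k) := by
  constructor
  · exact fun v => ⟨1, fun i => conj_one _⟩
  · rintro v w ⟨g, hg⟩
    refine ⟨g⁻¹, fun i => ?_⟩
    rw [← hg i, conj_conj, inv_mul_cancel]
    exact conj_one _
  · rintro u v w ⟨g, hg⟩ ⟨h, hh⟩
    refine ⟨h * g, fun i => ?_⟩
    rw [← conj_conj, hg, hh]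

end C2K

namespace C2K
variable {F : Type} [Field F]
local notation "Mat" => Matrix (Fin 2) (Fin 2) F

lemma conj_commute {g : GL (Fin 2) F} {A B : Mat} (h : Commute A B) :
    Commute ((↑g : Mat) * A * (↑g⁻¹ : Mat)) ((↑g : Mat) * B * (↑g⁻¹ : Mat)) := by
  show _ * _ = _ * _
  have h1 : (↑g⁻¹ : Mat) * (↑g : Mat) = 1 := by
    rw [← Units.val_mul, inv_mul_cancel, Units.val_one]
  calc (↑g : Mat) * A * (↑g⁻¹ : Mat) * ((↑g : Mat) * B * (↑g⁻¹ : Mat))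
      = (↑g : Mat) * (A * ((↑g⁻¹ : Mat) * (↑g : Mat)) * B) * (↑g⁻¹ : Mat) := by
        simp [mul_assoc]
    _ = (↑g : Mat) * (B * ((↑g⁻¹ : Mat) * (↑g : Mat)) * A) * (↑g⁻¹ : Mat) := by
        rw [h1]; simp only [mul_one, h.eq]
    _ = (↑g : Mat) * B * (↑g⁻¹ : Mat) * ((↑g : Mat) * A * (↑g⁻¹ : Mat)) := by
        simp [mul_assoc]

/-- every commuting tuple is conjugate to a scalar tuple or a `Phi x` -/
lemma classification {k : ℕ} (v : CommTuple₂ F k) :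
    (∃ l, simConj₂ F k v (Psi l)) ∨ (∃ x : XS F k, simConj₂ F k v (Phi x)) := by
  by_cases hall : ∀ i, ∃ c : F, v.1 i = c • 1
  · left
    choose c hc using hall
    exact ⟨c, 1, fun i => by rw [conj_one]; exact hc i⟩
  · right
    push_neg at hall
    obtain ⟨i₀, hi₀⟩ := hall
    obtain ⟨g, hg⟩ := exists_conj_Cmat (A := v.1 i₀) (by simpa using hi₀)
    set t := v.1 i₀ 0 0 + v.1 i₀ 1 1 with ht
    set d := v.1 i₀ 0 0 * v.1 i₀ 1 1 - v.1 i₀ 0 1 * v.1 i₀ 1 0 with hd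
    set w : Fin k → Mat := fun j => (↑g : Mat) * v.1 j * (↑g⁻¹ : Mat) with hw
    have hcomm : ∀ j, w j * Cmat t d = Cmat t d * w j := by
      intro j
      rw [← hg]
      exact (conj_commute (v.2 j i₀)).eq
    have hwj := fun j => centralizer_Cmat t d (w j) (hcomm j)
    have hb : (fun j => w j 1 0) ≠ (0 : Fin k → F) := by
      intro hzero
      have h1 : w i₀ 1 0 = 1 := by simp only [hw]; rw [hg]; rfl
      have h2 := congrFun hzero i₀
      simp [h1] at h2
    refine ⟨((t, d), fun j => w j 0 0, ⟨fun j => w j 1 0, hb⟩), g, fun i => ?_⟩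
    show w i = _
    exact hwj i
end C2K

namespace C2K
variable {F : Type} [Field F]
local notation "Mat" => Matrix (Fin 2) (Fin 2) F

lemma psi_inj {k : ℕ} {l m : Fin k → F} (h : simConj₂ F k (Psi l) (Psi m)) : l = m := by
  obtain ⟨g, hg⟩ := h
  funext i
  have := hg i
  rw [show (Psi l).1 i = l i • (1 : Mat) from rfl, conj_smul_one,
    show (Psi m).1 i = m i • (1 : Mat) from rfl] at this
  have h00 := congrFun (congrFun this 0) 0
  simpa [Matrix.one_apply] using h00

lemma psi_not_phi {k : ℕ} (l : Fin k → F) (x : XS F k) :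
    ¬ simConj₂ F k (Psi l) (Phi x) := by
  rintro ⟨g, hg⟩
  obtain ⟨j, hj⟩ := Function.ne_iff.mp x.2.2.2
  have := hg j
  rw [show (Psi l).1 j = l j • (1 : Mat) from rfl, conj_smul_one] at this
  have h10 := congrFun (congrFun this 1) 0
  simp [Phi, Matrix.one_apply, Cmat] at h10
  exact hj h10.symm

/-- the matrix `M` used to realize the affine action by conjugation -/
lemma smul_simConj {k : ℕ} (g : Aff F) (x : XS F k) :
    simConj₂ F k (Phi x) (Phi (g • x)) := by
  obtain ⟨⟨t, d⟩, a, b, hb⟩ := x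
  set α := g.α with hα
  set β := g.β with hβ
  set M : Mat := α⁻¹ • (Cmat t d - β • 1) with hM
  have hM10 : M 1 0 = α⁻¹ := by simp [hM, Cmat, Matrix.one_apply]
  have hMns : ¬ ∃ c : F, M = c • 1 := by
    rintro ⟨c, hc⟩
    have := congrFun (congrFun hc 1) 0
    rw [hM10] at this
    simp [Matrix.one_apply] at this
    exact g.hα this
  obtain ⟨h, hh⟩ := exists_conj_Cmat hMns
  have hMentries : M 0 0 + M 1 1 = α⁻¹ * (t - 2 * β) ∧
      M 0 0 * M 1 1 - M 0 1 * M 1 0 = α⁻¹ ^ 2 * (d - β * t + β ^ 2) := by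
    constructor <;> (simp [hM, Cmat, Matrix.one_apply]; ring)
  refine ⟨h, fun j => ?_⟩
  show (↑h : Mat) * (a j • 1 + b j • Cmat t d) * (↑h⁻¹ : Mat) = _
  have hC : Cmat t d = β • (1 : Mat) + α • M := by
    rw [hM, smul_smul, mul_inv_cancel₀ g.hα, one_smul]
    abel
  rw [conj_add, conj_smul_one, conj_smul, hC, conj_add, conj_smul_one, conj_smul, hh,
    hMentries.1, hMentries.2]
  show _ = (a j + β * b j) • (1 : Mat) + (α * b j) • Cmat _ _
  rw [smul_add, smul_smul, smul_smul, add_smul, mul_comm (b j) β, mul_comm (b j) α]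
  abel
end C2K

namespace C2K
variable {F : Type} [Field F]
local notation "Mat" => Matrix (Fin 2) (Fin 2) F

lemma phi_conj_smul {k : ℕ} {x y : XS F k} (h : simConj₂ F k (Phi x) (Phi y)) :
    ∃ g : Aff F, g • x = y := by
  obtain ⟨g, hg⟩ := h
  obtain ⟨⟨t, d⟩, a, b, hb⟩ := x
  obtain ⟨⟨t', d'⟩, a', b', hb'⟩ := y
  set C : Mat := Cmat t d with hC
  set C' : Mat := Cmat t' d' with hC'
  set D : Mat := (↑g : Mat) * C * (↑g⁻¹ : Mat) with hD
  have hgj : ∀ j, a j • (1 : Mat) + b j • D = a' j • 1 + b' j • C' := by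
    intro j
    have := hg j
    rw [show (Phi (⟨⟨t,d⟩,a,⟨b,hb⟩⟩ : XS F k)).1 j = a j • (1 : Mat) + b j • C from rfl,
      conj_add, conj_smul_one, conj_smul] at this
    exact this
  obtain ⟨j2, hj2⟩ := Function.ne_iff.mp hb'
  simp only [Pi.zero_apply] at hj2
  -- D commutes with C'
  have hcomm : D * C' = C' * D := by
    have h1 : Commute C ((a j2) • (1 : Mat) + (b j2) • C) := by
      have := comm_lin (Cmat t d) 0 1 (a j2) (b j2)
      simpa using this
    have h2 := conj_commute (g := g) h1
    rw [show (↑g : Mat) * ((a j2) • (1 : Mat) + (b j2) • C) * (↑g⁻¹ : Mat)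
        = a j2 • (1 : Mat) + b j2 • D from by rw [conj_add, conj_smul_one, conj_smul],
      hgj j2] at h2
    have h3 : D * (a' j2 • (1 : Mat) + b' j2 • C') = (a' j2 • (1 : Mat) + b' j2 • C') * D :=
      h2.eq
    have h4 : b' j2 • (D * C') = b' j2 • (C' * D) := by
      have := h3
      simp only [mul_add, add_mul, mul_smul_comm, smul_mul_assoc, mul_one, one_mul] at this
      have h5 := add_left_cancel this
      exact h5
    exact smul_right_injective (Matrix (Fin 2) (Fin 2) F) hj2 h4
  have hDc := centralizer_Cmat t' d' D hcomm
  set u := D 0 0 with hu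
  set w := D 1 0 with hw
  -- w ≠ 0
  have hwne : w ≠ 0 := by
    intro hw0
    have hCD : C = (↑g⁻¹ : Mat) * D * (↑(g⁻¹)⁻¹ : Mat) := by
      rw [hD, conj_conj, inv_mul_cancel, conj_one]
    rw [hw0, zero_smul, add_zero] at hDc
    have : C 1 0 = u • (1 : Mat) 1 0 := by
      rw [hCD, hDc, conj_smul_one]
      simp
    simp [hC, Cmat, Matrix.one_apply] at this
  -- entrywise consequences
  have hab : ∀ j, a j + b j * u = a' j ∧ b j * w = b' j := by
    intro j
    have h00 := congrFun (congrFun (hgj j) 0) 0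
    have h10 := congrFun (congrFun (hgj j) 1) 0
    constructor
    · simpa [Cmat, Matrix.one_apply, hC'] using h00
    · simpa [Cmat, Matrix.one_apply, hC'] using h10
  -- trace and det
  have htr : t = 2 * u + w * t' := by
    have h1 : Matrix.trace D = Matrix.trace C := Matrix.trace_units_conj g C
    have h2 : Matrix.trace C = t := by simp [hC, Cmat, Matrix.trace_fin_two]
    have h3 : D 1 1 = u + w * t' := by
      have := congrFun (congrFun hDc 1) 1
      simpa [Cmat, Matrix.one_apply, hC'] using this
    rw [Matrix.trace_fin_two, h2, h3] at h1
    rw [← h1]; ring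
  have hdet : d = u ^ 2 + u * w * t' + w ^ 2 * d' := by
    have h1 : Matrix.det D = Matrix.det C := Matrix.det_units_conj g C
    have h2 : Matrix.det C = d := by simp [hC, Cmat, Matrix.det_fin_two]
    have h3 : D 1 1 = u + w * t' := by
      have := congrFun (congrFun hDc 1) 1
      simpa [Cmat, Matrix.one_apply, hC'] using this
    have h4 : D 0 1 = -(w * d') := by
      have := congrFun (congrFun hDc 0) 1
      simpa [Cmat, Matrix.one_apply, hC'] using this
    rw [Matrix.det_fin_two, h2, h3, h4, ← hu, ← hw] at h1
    rw [← h1]; ring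
  refine ⟨⟨w, u, hwne⟩, ?_⟩
  refine Prod.ext (Prod.ext ?_ ?_) (Prod.ext ?_ (Subtype.ext ?_))
  · show w⁻¹ * (t - 2 * u) = t'
    field_simp
    linear_combination htr
  · show w⁻¹ ^ 2 * (d - u * t + u ^ 2) = d'
    field_simp
    linear_combination hdet - u * htr
  · funext j
    show a j + u * b j = a' j
    rw [mul_comm]
    exact (hab j).1
  · funext j
    show w * b j = b' j
    rw [mul_comm]
    exact (hab j).2
end C2K

namespace C2K
variable {F : Type} [Field F]

lemma quot_mk_eq_iff {k : ℕ} {v w : CommTuple₂ F k} :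
    Quot.mk (simConj₂ F k) v = Quot.mk (simConj₂ F k) w ↔ simConj₂ F k v w := by
  rw [Quot.eq]
  exact (simConj_equiv k).eqvGen_iff

/-- the main bijection -/
noncomputable def mainEquiv (k : ℕ) :
    ((Fin k → F) ⊕ MulAction.orbitRel.Quotient (Aff F) (XS F k)) ≃ Quot (simConj₂ F k) := by
  letI : Setoid (XS F k) := MulAction.orbitRel (Aff F) (XS F k)
  apply Equiv.ofBijective
    (Sum.elim (fun l => Quot.mk (simConj₂ F k) (Psi l))
      (Quotient.lift (fun x => Quot.mk (simConj₂ F k) (Phi x)) ?_))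
  constructor
  · rintro (l | xq) (m | yq) h <;> simp only [Sum.elim_inl, Sum.elim_inr] at h
    · rw [Sum.inl.injEq]
      exact psi_inj (quot_mk_eq_iff.mp h)
    · exfalso
      induction yq using Quotient.inductionOn with
      | h y => exact psi_not_phi l y (quot_mk_eq_iff.mp h)
    · exfalso
      induction xq using Quotient.inductionOn with
      | h x => exact psi_not_phi m x ((simConj_equiv k).symm (quot_mk_eq_iff.mp h))
    · rw [Sum.inr.injEq]
      induction xq using Quotient.inductionOn with
      | h x =>
        induction yq using Quotient.inductionOn with
        | h y =>
          obtain ⟨g, hg⟩ := phi_conj_smul (quot_mk_eq_iff.mp h)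
          exact Quotient.sound (Setoid.symm (MulAction.orbitRel_apply.mpr ⟨g, hg⟩))
  · intro vq
    induction vq using Quot.inductionOn with
    | h v =>
      rcases classification v with ⟨l, hl⟩ | ⟨x, hx⟩
      · exact ⟨Sum.inl l, (quot_mk_eq_iff.mpr ((simConj_equiv k).symm hl))⟩
      · exact ⟨Sum.inr ⟦x⟧, (quot_mk_eq_iff.mpr ((simConj_equiv k).symm hx))⟩
  · intro x y hxy
    obtain ⟨g, hg⟩ := MulAction.orbitRel_apply.mp hxy
    exact (quot_mk_eq_iff.mpr ((simConj_equiv k).symm (hg ▸ smul_simConj g y)))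
end C2K

namespace C2K
variable {F : Type} [Field F]

instance {k : ℕ} [Fintype F] : Finite (XS F k) := by
  unfold XS
  infer_instance

instance [Fintype F] : Finite (Aff F) :=
  Finite.of_injective (fun g => (g.α, g.β)) (by
    rintro ⟨a1, b1, h1⟩ ⟨a2, b2, h2⟩ h
    simp only [Prod.mk.injEq] at h
    ext <;> simp [h.1, h.2])

lemma stab_bot {k : ℕ} (x : XS F k) : MulAction.stabilizer (Aff F) x = ⊥ := by
  ext g
  simp only [MulAction.mem_stabilizer_iff, Subgroup.mem_bot]
  constructor
  · intro h
    obtain ⟨j, hj⟩ := Function.ne_iff.mp x.2.2.2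
    simp only [Pi.zero_apply] at hj
    have hbj : g.α * x.2.2.1 j = x.2.2.1 j := congrArg (fun z => z.2.2.1 j) h
    have haj : x.2.1 j + g.β * x.2.2.1 j = x.2.1 j := congrArg (fun z => z.2.1 j) h
    have hα : g.α = 1 := by
      have := mul_right_cancel₀ hj (hbj.trans (one_mul (x.2.2.1 j)).symm)
      exact this
    have hβ : g.β = 0 := by
      have h0 : g.β * x.2.2.1 j = 0 := add_eq_left.mp haj
      rcases mul_eq_zero.mp h0 with h' | h'
      · exact h'
      · exact absurd h' hj
    ext <;> simp [hα, hβ]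
  · rintro rfl
    exact one_smul _ _

lemma card_orbit [Fintype F] {k : ℕ} (x : XS F k) :
    Nat.card (MulAction.orbit (Aff F) x) = Nat.card (Aff F) := by
  have e1 := MulAction.orbitEquivQuotientStabilizer (Aff F) x
  rw [stab_bot] at e1
  exact Nat.card_congr (e1.trans QuotientGroup.quotientBot.toEquiv)

lemma card_XS_eq [Fintype F] (k : ℕ) :
    Nat.card (XS F k) =
      Nat.card (MulAction.orbitRel.Quotient (Aff F) (XS F k)) * Nat.card (Aff F) := by
  classical
  rw [Nat.card_congr (MulAction.selfEquivSigmaOrbits (Aff F) (XS F k))]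
  letI : Fintype (MulAction.orbitRel.Quotient (Aff F) (XS F k)) := Fintype.ofFinite _
  letI : Fintype (Aff F) := Fintype.ofFinite _
  letI : ∀ ω : MulAction.orbitRel.Quotient (Aff F) (XS F k),
      Fintype (MulAction.orbit (Aff F) (ω.out : XS F k)) := fun _ => Fintype.ofFinite _
  rw [Nat.card_eq_fintype_card, Fintype.card_sigma]
  have : ∀ ω : MulAction.orbitRel.Quotient (Aff F) (XS F k),
      Fintype.card (MulAction.orbit (Aff F) (ω.out : XS F k)) = Nat.card (Aff F) := by
    intro ω
    rw [← Nat.card_eq_fintype_card]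
    exact card_orbit _
  rw [Finset.sum_congr rfl (fun ω _ => this ω), Finset.sum_const, Finset.card_univ,
    smul_eq_mul]
  simp [Nat.card_eq_fintype_card]

def affEquiv : Aff F ≃ Fˣ × F where
  toFun g := (Units.mk0 g.α g.hα, g.β)
  invFun p := ⟨p.1, p.2, p.1.ne_zero⟩
  left_inv g := by ext <;> simp
  right_inv p := by
    refine Prod.ext (Units.ext ?_) rfl
    simp

lemma card_aff [Fintype F] : Nat.card (Aff F) = (Fintype.card F - 1) * Fintype.card F := by
  rw [Nat.card_congr affEquiv, Nat.card_prod, Nat.card_units]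
  simp [Nat.card_eq_fintype_card]

lemma card_XS [Fintype F] (k : ℕ) :
    Nat.card (XS F k) =
      Fintype.card F * Fintype.card F * (Fintype.card F ^ k * (Fintype.card F ^ k - 1)) := by
  classical
  unfold XS
  rw [Nat.card_prod, Nat.card_prod, Nat.card_prod]
  have h1 : Nat.card F = Fintype.card F := Nat.card_eq_fintype_card
  have h2 : Nat.card (Fin k → F) = Fintype.card F ^ k := by
    rw [Nat.card_fun, Nat.card_eq_fintype_card, Nat.card_eq_fintype_card, Fintype.card_fin]
  have h3 : Nat.card {b : Fin k → F // b ≠ 0} = Fintype.card F ^ k - 1 := by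
    rw [Nat.card_eq_fintype_card, Fintype.card_subtype_compl (fun b => b = (0 : Fin k → F)),
      Fintype.card_subtype_eq]
    rw [Fintype.card_fun, Fintype.card_fin]
  rw [h1, h2, h3]

end C2K

namespace C2K
variable {F : Type} [Field F]

lemma card_quot [Fintype F] (k : ℕ) :
    Nat.card (Quot (simConj₂ F k)) = Fintype.card F ^ k +
      Nat.card (MulAction.orbitRel.Quotient (Aff F) (XS F k)) := by
  rw [← Nat.card_congr (mainEquiv (F := F) k), Nat.card_sum]
  congr 1
  rw [Nat.card_fun, Nat.card_eq_fintype_card, Nat.card_eq_fintype_card, Fintype.card_fin]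

lemma geom_aux (q k : ℕ) (h : 1 ≤ q) :
    (q - 1) * (∑ i ∈ Finset.range k, q ^ i) + 1 = q ^ k := by
  induction k with
  | zero => simp
  | succ n ih =>
    rw [Finset.sum_range_succ, Nat.mul_add, pow_succ]
    have h2 : (q - 1) * q ^ n + q ^ n = q ^ n * q := by
      cases q with
      | zero => omega
      | succ m =>
        simp only [Nat.succ_sub_one]
        ring
    omega

lemma card_orbitQuot [Fintype F] (k : ℕ) :
    Nat.card (MulAction.orbitRel.Quotient (Aff F) (XS F k)) =
      Fintype.card F ^ (k + 1) * ∑ i ∈ Finset.range k, Fintype.card F ^ i := by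
  set q := Fintype.card F with hq
  have hq2 : 2 ≤ q := Fintype.one_lt_card
  have h := card_XS_eq (F := F) k
  rw [card_XS, card_aff] at h
  apply Nat.eq_of_mul_eq_mul_right (show 0 < (q - 1) * q by
    apply Nat.mul_pos <;> omega)
  rw [← h]
  have hgeom : q ^ k - 1 = (q - 1) * (∑ i ∈ Finset.range k, q ^ i) := by
    have := geom_aux q k (by omega)
    omega
  rw [hgeom]
  ring

lemma Bpow_entries (q k : ℕ) :
    ((!![q, 0; q ^ 2, q ^ 2] : Matrix (Fin 2) (Fin 2) ℕ) ^ k) 0 0 = q ^ k ∧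
    ((!![q, 0; q ^ 2, q ^ 2] : Matrix (Fin 2) (Fin 2) ℕ) ^ k) 0 1 = 0 ∧
    ((!![q, 0; q ^ 2, q ^ 2] : Matrix (Fin 2) (Fin 2) ℕ) ^ k) 1 0 =
      q ^ (k + 1) * ∑ i ∈ Finset.range k, q ^ i ∧
    ((!![q, 0; q ^ 2, q ^ 2] : Matrix (Fin 2) (Fin 2) ℕ) ^ k) 1 1 = q ^ (2 * k) := by
  induction k with
  | zero => simp [Matrix.one_apply]
  | succ n ih =>
    obtain ⟨h00, h01, h10, h11⟩ := ih
    rw [pow_succ]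
    have e00 : (!![q, 0; q ^ 2, q ^ 2] : Matrix (Fin 2) (Fin 2) ℕ) 0 0 = q := rfl
    have e01 : (!![q, 0; q ^ 2, q ^ 2] : Matrix (Fin 2) (Fin 2) ℕ) 0 1 = 0 := rfl
    have e10 : (!![q, 0; q ^ 2, q ^ 2] : Matrix (Fin 2) (Fin 2) ℕ) 1 0 = q ^ 2 := rfl
    have e11 : (!![q, 0; q ^ 2, q ^ 2] : Matrix (Fin 2) (Fin 2) ℕ) 1 1 = q ^ 2 := rfl
    refine ⟨?_, ?_, ?_, ?_⟩ <;>
      · simp only [Matrix.mul_apply, Fin.sum_univ_two, h00, h01, h10, h11,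
          e00, e01, e10, e11, Finset.sum_range_succ]
        ring

end C2K


open C2K

/-- For every `k ≥ 1`, the number `c_{2,k}(q)` of simultaneous similarity classes of
commuting `k`-tuples of `2 × 2` matrices over `𝔽_q` equals
`(1 1)·Bᵏ·(1 0)ᵀ` for the branching matrix `B = [[q,0],[q²,q²]]`; in particular it is
given by a polynomial in `q` with non-negative integer coefficients. -/
theorem c2k_branching (k : ℕ) (hk : 1 ≤ k) :
    ∃ P : Polynomial ℕ, ∀ (F : Type) [Field F] [Fintype F],
      Nat.card (Quot (simConj₂ F k)) =
        (∑ i : Fin 2,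
          ((!![Fintype.card F, 0; Fintype.card F ^ 2, Fintype.card F ^ 2] : Matrix (Fin 2) (Fin 2) ℕ) ^ k) i 0) ∧
      Nat.card (Quot (simConj₂ F k)) = P.eval (Fintype.card F) := by
  refine ⟨Polynomial.X ^ k + Polynomial.X ^ (k + 1) * ∑ i ∈ Finset.range k, Polynomial.X ^ i,
    fun F _ _ => ?_⟩
  have hmain : Nat.card (Quot (simConj₂ F k)) =
      Fintype.card F ^ k + Fintype.card F ^ (k + 1) *
        ∑ i ∈ Finset.range k, Fintype.card F ^ i := by
    rw [card_quot, card_orbitQuot]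
  constructor
  · rw [hmain, Fin.sum_univ_two, (Bpow_entries (Fintype.card F) k).1,
      (Bpow_entries (Fintype.card F) k).2.2.1]
  · rw [hmain]
    simp [Polynomial.eval_finset_sum]
end

section
/- The generating function ∑_{k≥0} c_{2,k}(q) tᵏ equals 1/((1−qt)(1−q²t)), where c_{2,k}(q) is the number of simultaneous similarity classes of commuting k-tuples of 2×2 matrices over 𝔽_q (with c_{2,0} = 1). -/
/-!
Split a commuting tuple `(A₀, …, Aₖ)` according to `A₀`. A scalar `A₀` is fixed by conjugation,
so the orbit is determined by `A₀` and the orbit of `(A₁, …, Aₖ)`. A non-scalar `A₀` is conjugate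
to the companion matrix of its characteristic polynomial, and its centralizer `F[A₀] = F ⊕ F A₀`
is commutative, so the orbit is determined by `(tr A₀, det A₀)` and the coordinates of
`A₁, …, Aₖ` in `F[A₀]`. Hence `c₀ = 1` and `c_{k+1} = q cₖ + q^{2(k+1)}`, the recursion satisfied
by the coefficients of `1/((1 - qt)(1 - q²t))`.
-/

open PowerSeries in
theorem PowerSeries.mk_mul_one_sub_mul_one_sub_eq_one {R : Type*} [CommRing R] {a b : R}
    {c : ℕ → R} (h0 : c 0 = 1) (hsucc : ∀ n, c (n + 1) = a * c n + b ^ (n + 1)) :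
    mk c * ((1 - C a * X) * (1 - C b * X)) = 1 := by
  have hfirst : mk c * (1 - C a * X) = rescale b (mk 1) := by
    ext (_ | n)
    · simp [h0]
    · rw [mul_sub, mul_one, ← mul_assoc, mul_comm _ (C a), mul_assoc, map_sub, coeff_C_mul,
        coeff_succ_mul_X, rescale_mk, coeff_mk, coeff_mk, coeff_mk, hsucc]
      simp
  rw [← mul_assoc, hfirst, ← map_one (rescale b), ← rescale_X, ← map_sub, ← map_mul,
    mk_one_mul_one_sub_eq_one, map_one]

section Pencil
variable {K R : Type*} [CommRing K] [Ring R] [Algebra K R]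

def evalLin (A : R) (p : K × K) : R := p.1 • 1 + p.2 • A

theorem commute_evalLin (A : R) (p p' : K × K) : Commute (evalLin A p) (evalLin A p') :=
  have hA : Commute (evalLin A p) A :=
    ((Commute.one_left A).smul_left _).add_left ((Commute.refl A).smul_left _)
  (((Commute.one_right _).smul_right _).add_right (hA.smul_right _))

@[simp] theorem evalLin_zero_one (A : R) : evalLin A ((0, 1) : K × K) = A := by
  simp [evalLin]

theorem Units.conj_smul_one (u : Rˣ) (c : K) : (u : R) * (c • 1) * ↑u⁻¹ = c • 1 := by
  rw [mul_smul_comm, mul_one, smul_mul_assoc, Units.mul_inv]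

theorem Units.conj_evalLin (u : Rˣ) (A : R) (p : K × K) :
    (u : R) * evalLin A p * ↑u⁻¹ = evalLin ((u : R) * A * ↑u⁻¹) p := by
  rw [evalLin, evalLin, mul_add, add_mul, Units.conj_smul_one, mul_smul_comm, smul_mul_assoc]

end Pencil

theorem Commute.units_conj {M : Type*} [Monoid M] (u : Mˣ) {a b : M} (h : Commute a b) :
    Commute ((u : M) * a * ↑u⁻¹) (u * b * ↑u⁻¹) := by
  simp only [Commute, SemiconjBy, mul_assoc, Units.inv_mul_cancel_left]
  rw [← mul_assoc a, h.eq, mul_assoc]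

section TwoByTwo
open Matrix
variable {F : Type*} [Field F]

local notation "M₂" => Matrix (Fin 2) (Fin 2) F

def IsScalar (A : M₂) : Prop := ∃ c : F, c • 1 = A

theorem isScalar_iff {A : M₂} :
    IsScalar A ↔ A 0 1 = 0 ∧ A 1 0 = 0 ∧ A 0 0 = A 1 1 := by
  refine ⟨?_, fun ⟨h01, h10, h⟩ => ⟨A 0 0, ?_⟩⟩
  · rintro ⟨c, rfl⟩
    simp
  · ext i j
    fin_cases i <;> fin_cases j <;> simp [h01, h10, h]

theorem IsScalar.smul_one_eq {A : M₂} (h : IsScalar A) : A 0 0 • 1 = A := by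
  obtain ⟨c, rfl⟩ := h
  simp

theorem isScalar_units_conj_iff (g : GL (Fin 2) F) {A : M₂} :
    IsScalar ((g : M₂) * A * ((g⁻¹ : GL (Fin 2) F) : M₂)) ↔ IsScalar A := by
  refine ⟨fun ⟨c, hc⟩ => ⟨c, ?_⟩, fun ⟨c, hc⟩ => ⟨c, by rw [← hc, Units.conj_smul_one]⟩⟩
  rw [← Units.conj_smul_one g⁻¹, hc, inv_inv]
  simp [mul_assoc]

def companion (t d : F) : M₂ := !![0, -d; 1, t]

@[simp] theorem trace_companion (t d : F) : trace (companion t d) = t := by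
  simp [companion, trace_fin_two]

@[simp] theorem det_companion (t d : F) : det (companion t d) = d := by
  simp [companion, det_fin_two]

theorem not_isScalar_companion (t d : F) : ¬ IsScalar (companion t d) := by
  simp [isScalar_iff, companion]

theorem eq_evalLin_of_commute_companion {t d : F} {B : M₂}
    (h : Commute (companion t d) B) : B = evalLin (companion t d) (B 0 0, B 1 0) := by
  have h01 : B 0 1 = -(d * B 1 0) := by
    simpa [companion, mul_apply, Fin.sum_univ_two] using (congrFun₂ h.eq 0 0).symm
  have h11 : B 1 1 = B 0 0 + t * B 1 0 := by
    simpa [companion, mul_apply, Fin.sum_univ_two] using (congrFun₂ h.eq 1 0).symm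
  ext i j
  fin_cases i <;> fin_cases j <;> simp [evalLin, companion, h01, h11, mul_comm]

def cyclicMatrix (A : M₂) (v : Fin 2 → F) : M₂ :=
  (of ![v, A *ᵥ v])ᵀ

theorem mul_cyclicMatrix (A : M₂) (v : Fin 2 → F) :
    A * cyclicMatrix A v = cyclicMatrix A v * companion (trace A) (det A) := by
  ext i j
  fin_cases i <;> fin_cases j <;>
    simp [cyclicMatrix, companion, mul_apply, Fin.sum_univ_two,
      trace_fin_two, det_fin_two] <;> ring

theorem exists_det_cyclicMatrix_ne_zero {A : M₂} (hA : ¬ IsScalar A) :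
    ∃ v, det (cyclicMatrix A v) ≠ 0 := by
  simp only [isScalar_iff, not_and_or] at hA
  simp only [cyclicMatrix, det_fin_two, transpose_apply, of_apply]
  by_cases h10 : A 1 0 = 0
  · by_cases h01 : A 0 1 = 0
    · refine ⟨![1, 1], ?_⟩
      simp only [h10, h01, not_true, false_or] at hA
      simpa [h10, h01, sub_eq_zero] using Ne.symm hA
    · exact ⟨![0, 1], by simpa using h01⟩
  · exact ⟨![1, 0], by simpa using h10⟩

theorem exists_units_conj_companion {A : M₂} (hA : ¬ IsScalar A) :
    ∃ g : GL (Fin 2) F,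
      (g : M₂) * companion (trace A) (det A) * ((g⁻¹ : GL (Fin 2) F) : M₂) = A := by
  obtain ⟨v, hv⟩ := exists_det_cyclicMatrix_ne_zero hA
  refine ⟨(isUnit_iff_isUnit_det _).mpr hv.isUnit |>.unit, ?_⟩
  rw [Units.mul_inv_eq_iff_eq_mul, IsUnit.unit_spec, mul_cyclicMatrix]

theorem evalLin_injective {A : M₂} (hA : ¬ IsScalar A) :
    Function.Injective (evalLin (K := F) A) := by
  rintro ⟨a, b⟩ ⟨a', b'⟩ h
  obtain rfl : b = b' := by
    by_contra hb
    refine hA ⟨(a' - a) / (b - b'), ?_⟩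
    rw [evalLin, evalLin, ← sub_eq_zero] at h
    have : (b - b') • A = (a' - a) • 1 := by
      rw [← sub_eq_zero, ← h]; module
    rw [div_eq_inv_mul, mul_smul, ← this, inv_smul_smul₀ (sub_ne_zero.mpr hb)]
  simpa [evalLin] using congrFun₂ h 0 0

theorem exists_evalLin_eq_of_commute {A B : M₂} (hA : ¬ IsScalar A) (h : Commute A B) :
    ∃ p : F × F, evalLin A p = B := by
  obtain ⟨g, hg⟩ := exists_units_conj_companion hA
  set C := companion (trace A) (det A)
  rw [← hg] at h ⊢
  set B' := ((g⁻¹ : GL (Fin 2) F) : M₂) * B * (g : M₂)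
  have hB' : Commute C B' := by
    simpa only [inv_inv, mul_assoc, Units.inv_mul_cancel_left, Units.inv_mul, mul_one, B'] using
      h.units_conj g⁻¹
  refine ⟨(B' 0 0, B' 1 0), ?_⟩
  rw [← Units.conj_evalLin, ← eq_evalLin_of_commute_companion hB']
  simp [B', mul_assoc]

/-- The coordinates of `B` in the basis `1, A` of the centralizer of a non-scalar `A`
(junk otherwise). -/
noncomputable def coords (A B : M₂) : F × F := Function.invFun (evalLin (K := F) A) B

theorem evalLin_coords {A B : M₂} (hA : ¬ IsScalar A) (h : Commute A B) :
    evalLin A (coords A B) = B :=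
  Function.invFun_eq (exists_evalLin_eq_of_commute hA h)

theorem coords_evalLin {A : M₂} (hA : ¬ IsScalar A) (p : F × F) : coords A (evalLin A p) = p :=
  Function.leftInverse_invFun (evalLin_injective hA) p

theorem coords_units_conj {A B : M₂} (hA : ¬ IsScalar A) (h : Commute A B) (g : GL (Fin 2) F) :
    coords ((g : M₂) * A * ((g⁻¹ : GL (Fin 2) F) : M₂))
      ((g : M₂) * B * ((g⁻¹ : GL (Fin 2) F) : M₂)) = coords A B := by
  rw [← evalLin_coords hA h, Units.conj_evalLin,
    coords_evalLin ((isScalar_units_conj_iff g).not.mpr hA), evalLin_coords hA h]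

end TwoByTwo

namespace CommTuple₂
variable {F : Type} [Field F] {k : ℕ}

local notation "M₂" => Matrix (Fin 2) (Fin 2) F

def conj (v : CommTuple₂ F k) (g : GL (Fin 2) F) : CommTuple₂ F k :=
  ⟨fun i => (g : M₂) * v.1 i * ((g⁻¹ : GL (Fin 2) F) : M₂), fun i j => (v.2 i j).units_conj g⟩

theorem exists_eq_conj_of_simConj₂ {v w : CommTuple₂ F k} (h : simConj₂ F k v w) :
    ∃ g, w = v.conj g :=
  let ⟨g, hg⟩ := h
  ⟨g, Subtype.ext (funext fun i => (hg i).symm)⟩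

def tail (v : CommTuple₂ F (k + 1)) : CommTuple₂ F k :=
  ⟨Fin.tail v.1, fun i j => v.2 i.succ j.succ⟩

def scalarCons (c : F) (v : CommTuple₂ F k) : CommTuple₂ F (k + 1) :=
  have hc (B : M₂) : Commute (c • 1) B := (Commute.one_left B).smul_left c
  ⟨Fin.cons (c • 1) v.1, Fin.cases (Fin.cases (hc _) fun _ => hc _)
    fun i => Fin.cases (hc _).symm fun j => v.2 i j⟩

@[simp] theorem scalarCons_apply_zero (c : F) (v : CommTuple₂ F k) :
    (scalarCons c v).1 0 = c • 1 := rfl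

@[simp] theorem tail_scalarCons (c : F) (v : CommTuple₂ F k) : (scalarCons c v).tail = v := rfl

def ofCoords (A : M₂) (p : Fin k → F × F) : CommTuple₂ F k :=
  ⟨fun i => evalLin A (p i), fun i j => commute_evalLin A (p i) (p j)⟩

@[simp] theorem ofCoords_apply (A : M₂) (p : Fin k → F × F) (i : Fin k) :
    (ofCoords A p).1 i = evalLin A (p i) := rfl

end CommTuple₂

section Classification
open Matrix CommTuple₂
variable {F : Type} [Field F] {k : ℕ}

local notation "M₂" => Matrix (Fin 2) (Fin 2) F

variable (F) in
/-- The orbit of `(A₀, A₁, …, Aₖ)` is recorded as either the scalar `A₀` with the orbit of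
`(A₁, …, Aₖ)`, or the trace and determinant of a non-scalar `A₀` with the coordinates of
`A₁, …, Aₖ` in `F[A₀]`. -/
abbrev OrbitData (k : ℕ) : Type := F × Quot (simConj₂ F k) ⊕ (F × F) × (Fin k → F × F)

open Classical in
noncomputable def classify (v : CommTuple₂ F (k + 1)) : OrbitData F k :=
  if IsScalar (v.1 0) then .inl (v.1 0 0 0, Quot.mk _ v.tail)
  else .inr ((trace (v.1 0), det (v.1 0)), fun j => coords (v.1 0) (v.1 j.succ))

theorem classify_conj (v : CommTuple₂ F (k + 1)) (g : GL (Fin 2) F) :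
    classify (v.conj g) = classify v := by
  by_cases h : IsScalar (v.1 0)
  · have h' : IsScalar ((v.conj g).1 0) := (isScalar_units_conj_iff g).mpr h
    have hfix : (v.conj g).1 0 = v.1 0 := by
      obtain ⟨c, hc⟩ := h
      show (g : M₂) * v.1 0 * _ = _
      rw [← hc, Units.conj_smul_one]
    rw [classify, classify, if_pos h, if_pos h', hfix, (Quot.sound ⟨g, fun _ => rfl⟩ :
      Quot.mk (simConj₂ F k) v.tail = Quot.mk _ (v.conj g).tail)]
  · have h' : ¬ IsScalar ((v.conj g).1 0) := (isScalar_units_conj_iff g).not.mpr h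
    rw [classify, classify, if_neg h, if_neg h']
    simp only [conj, trace_units_conj, det_units_conj, coords_units_conj h (v.2 _ _)]

noncomputable def classifyQuot : Quot (simConj₂ F (k + 1)) → OrbitData F k :=
  Quot.lift classify fun v _ h => by
    obtain ⟨g, rfl⟩ := exists_eq_conj_of_simConj₂ h
    exact (classify_conj v g).symm

noncomputable def normalForm : OrbitData F k → Quot (simConj₂ F (k + 1))
  | .inl (c, w) => Quot.map (scalarCons c)
      (fun _ _ ⟨g, hg⟩ => ⟨g, Fin.cases (Units.conj_smul_one g c) hg⟩) w
  | .inr ((t, d), p) => Quot.mk _ (ofCoords (companion t d) (Fin.cons (0, 1) p))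

theorem normalForm_classify (v : CommTuple₂ F (k + 1)) :
    normalForm (classify v) = Quot.mk _ v := by
  by_cases h : IsScalar (v.1 0)
  · rw [classify, if_pos h, normalForm]
    refine congrArg (Quot.mk _) (Subtype.ext ?_)
    show Fin.cons (v.1 0 0 0 • 1) (Fin.tail v.1) = v.1
    rw [h.smul_one_eq, Fin.cons_self_tail]
  · obtain ⟨g, hg⟩ := exists_units_conj_companion h
    rw [classify, if_neg h, normalForm]
    refine Quot.sound ⟨g, Fin.cases ?_ fun j => ?_⟩
    · simp only [ofCoords_apply, Fin.cons_zero, evalLin_zero_one, hg]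
    · simp only [ofCoords_apply, Fin.cons_succ, Units.conj_evalLin, hg,
        evalLin_coords h (v.2 0 j.succ)]

theorem classify_normalForm (x : OrbitData F k) : classifyQuot (normalForm x) = x := by
  rcases x with ⟨c, w⟩ | ⟨⟨t, d⟩, p⟩
  · induction w using Quot.ind with | mk w => ?_
    have h : IsScalar ((scalarCons c w).1 0) := ⟨c, rfl⟩
    show classify (scalarCons c w) = _
    rw [classify, if_pos h]
    simp
  · have h0 : (ofCoords (companion t d) (Fin.cons (0, 1) p)).1 0 = companion t d := by
      simp
    show classify (ofCoords _ _) = _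
    rw [classify, if_neg (by rw [h0]; exact not_isScalar_companion t d), h0]
    simp [coords_evalLin (not_isScalar_companion t d)]

variable (F) in
noncomputable def quotSimConj₂SuccEquiv (k : ℕ) : Quot (simConj₂ F (k + 1)) ≃ OrbitData F k where
  toFun := classifyQuot
  invFun := normalForm
  left_inv := Quot.ind normalForm_classify
  right_inv := classify_normalForm

end Classification

section Counting
variable {F : Type} [Field F]

instance [Finite F] (k : ℕ) : Finite (CommTuple₂ F k) := Subtype.finite

theorem card_quot_simConj₂_zero : Nat.card (Quot (simConj₂ F 0)) = 1 := by
  have : Unique (CommTuple₂ F 0) :=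
    ⟨⟨⟨Fin.elim0, fun i => i.elim0⟩⟩, fun _ => Subtype.ext (funext fun i => i.elim0)⟩
  exact Nat.card_unique

theorem card_quot_simConj₂_succ [Fintype F] (k : ℕ) :
    Nat.card (Quot (simConj₂ F (k + 1))) =
      Fintype.card F * Nat.card (Quot (simConj₂ F k)) + (Fintype.card F ^ 2) ^ (k + 1) := by
  rw [Nat.card_congr (quotSimConj₂SuccEquiv F k), Nat.card_sum]
  simp only [Nat.card_prod, Nat.card_eq_fintype_card, Fintype.card_prod, Fintype.card_fun,
    Fintype.card_fin]
  ring

end Counting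

/-- `∑_{k≥0} c_{2,k}(q) tᵏ = 1/((1−qt)(1−q²t))`: the generating function of the numbers
of simultaneous similarity classes of commuting `k`-tuples of `2 × 2` matrices over
`𝔽_q` (with `c_{2,0} = 1`), multiplied by `(1−qt)(1−q²t)`, equals `1` in `ℤ[[t]]`. -/
theorem c2k_genfun (F : Type) [Field F] [Fintype F] :
    (PowerSeries.mk fun k => (Nat.card (Quot (simConj₂ F k)) : ℤ)) *
        ((1 - PowerSeries.C (Fintype.card F : ℤ) * PowerSeries.X) *
         (1 - PowerSeries.C ((Fintype.card F : ℤ) ^ 2) * PowerSeries.X)) = 1 :=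
  PowerSeries.mk_mul_one_sub_mul_one_sub_eq_one (by simp [card_quot_simConj₂_zero])
    fun k => by simp [card_quot_simConj₂_succ]
end

section
/- Let A be a finite-dimensional algebra over 𝔽_q and let c_{A,k} count simultaneous conjugation orbits of A* on commuting k-tuples in A. Then c_{A,k} = ∑_Z s_Z c_{Z,k−1}, where Z runs over (isomorphism classes of) centralizer subalgebras of A and s_Z is the number of conjugacy classes of elements a ∈ A whose centralizer is isomorphic to Z. -/
/-- `k`-tuples of pairwise commuting elements of `A`. -/
def CommTuple (A : Type) [Ring A] (k : ℕ) : Type :=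
  {v : Fin k → A // ∀ i j, Commute (v i) (v j)}

/-- Simultaneous conjugation by `A*` on commuting `k`-tuples. -/
def tupleConj (A : Type) [Ring A] (k : ℕ) (v w : CommTuple A k) : Prop :=
  ∃ g : Aˣ, ∀ i, (g : A) * v.1 i * ((g⁻¹ : Aˣ) : A) = w.1 i

/-- Commuting `k`-tuples lying in the centralizer `Z_A(a)` of `a`. -/
def CentCommTuple (A : Type) [Ring A] (a : A) (k : ℕ) : Type :=
  {v : Fin k → A // (∀ i, Commute a (v i)) ∧ ∀ i j, Commute (v i) (v j)}

/-- Simultaneous conjugation by the unit group `Z_{A*}(a)` of the centralizer of `a`. -/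
def centTupleConj (A : Type) [Ring A] (a : A) (k : ℕ)
    (v w : CentCommTuple A a k) : Prop :=
  ∃ g : Aˣ, Commute (g : A) a ∧ ∀ i, (g : A) * v.1 i * ((g⁻¹ : Aˣ) : A) = w.1 i

namespace OrbitRec

variable {A : Type} [Ring A]

instance (k : ℕ) [Finite A] : Finite (CommTuple A k) := Subtype.finite

instance (a : A) (k : ℕ) [Finite A] : Finite (CentCommTuple A a k) := Subtype.finite

/-- Conjugation of `x` by the unit `g`. -/
def cj (g : Aˣ) (x : A) : A := (g : A) * x * ((g⁻¹ : Aˣ) : A)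

lemma cj_cj (g h : Aˣ) (x : A) : cj g (cj h x) = cj (g * h) x := by
  simp [cj, mul_assoc]

lemma cj_one (x : A) : cj 1 x = x := by simp [cj]

lemma cj_mul (g : Aˣ) (x y : A) : cj g (x * y) = cj g x * cj g y := by
  simp [cj, mul_assoc]

lemma cj_commute {x y : A} (g : Aˣ) (h : Commute x y) :
    Commute (cj g x) (cj g y) := by
  have : cj g x * cj g y = cj g y * cj g x := by
    rw [← cj_mul, ← cj_mul, h.eq]
  exact this

lemma cj_inv_eq {g : Aˣ} {x y : A} (h : cj g x = y) : cj g⁻¹ y = x := by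
  rw [← h, cj_cj]; simp [cj]

lemma commute_of_cj_eq {g : Aˣ} {a : A} (h : cj g a = a) : Commute (g : A) a := by
  have h2 := congrArg (· * (g : A)) h
  show (g : A) * a = a * (g : A)
  simpa [cj, mul_assoc] using h2

lemma cj_eq_of_commute {g : Aˣ} {a : A} (h : Commute (g : A) a) : cj g a = a := by
  show (g : A) * a * ((g⁻¹ : Aˣ) : A) = a
  rw [h.eq]
  simp [mul_assoc]

variable {m : ℕ} {T : Finset A}
variable (hT : ∀ b : A, ∃! a : A, a ∈ T ∧ ∃ g : Aˣ, cj g b = a)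

noncomputable def sel (b : A) : A := (hT b).choose

lemma sel_mem (b : A) : sel hT b ∈ T := (hT b).choose_spec.1.1

noncomputable def selg (b : A) : Aˣ := (hT b).choose_spec.1.2.choose

lemma selg_spec (b : A) : cj (selg hT b) b = sel hT b :=
  (hT b).choose_spec.1.2.choose_spec

lemma sel_unique {b y : A} (hy : y ∈ T) (g : Aˣ) (h : cj g b = y) :
    y = sel hT b :=
  (hT b).choose_spec.2 y ⟨hy, g, h⟩

/-- The conjugated tail of a commuting `(m+1)`-tuple, landing in the centralizer
of the chosen transversal element. -/
noncomputable def fwdTup (v : CommTuple A (m + 1)) :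
    CentCommTuple A (sel hT (v.1 0)) m :=
  ⟨fun i => cj (selg hT (v.1 0)) (v.1 i.succ),
   ⟨fun i => by
      rw [← selg_spec hT (v.1 0)]
      exact cj_commute _ (v.2 0 i.succ),
    fun i j => cj_commute _ (v.2 i.succ j.succ)⟩⟩

noncomputable def fwd (v : CommTuple A (m + 1)) :
    Σ a : T, Quot (centTupleConj A (a : A) m) :=
  ⟨⟨sel hT (v.1 0), sel_mem hT _⟩, Quot.mk _ (fwdTup hT v)⟩

/-- Characterization of `fwd` by an arbitrary witness. -/
lemma fwd_eq_mk {v : CommTuple A (m + 1)} {a : A} (ha : a ∈ T)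
    {w : CentCommTuple A a m} (g : Aˣ) (h0 : cj g (v.1 0) = a)
    (hw : ∀ i, cj g (v.1 i.succ) = w.1 i) :
    fwd hT v = ⟨⟨a, ha⟩, Quot.mk _ w⟩ := by
  have hae : a = sel hT (v.1 0) := sel_unique hT ha g h0
  subst hae
  have : Quot.mk (centTupleConj A (sel hT (v.1 0)) m) (fwdTup hT v) = Quot.mk _ w := by
    apply Quot.sound
    refine ⟨g * (selg hT (v.1 0))⁻¹, ?_, ?_⟩
    · apply commute_of_cj_eq
      show cj (g * (selg hT (v.1 0))⁻¹) (sel hT (v.1 0)) = sel hT (v.1 0)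
      rw [← cj_cj, cj_inv_eq (selg_spec hT (v.1 0)), h0]
    · intro i
      show cj (g * (selg hT (v.1 0))⁻¹) ((fwdTup hT v).1 i) = w.1 i
      show cj (g * (selg hT (v.1 0))⁻¹) (cj (selg hT (v.1 0)) (v.1 i.succ)) = w.1 i
      rw [cj_cj, mul_assoc]
      simp only [inv_mul_cancel, mul_one]
      exact hw i
  exact congrArg (fun q => (⟨⟨sel hT (v.1 0), sel_mem hT _⟩, q⟩ :
    Σ a : T, Quot (centTupleConj A (a : A) m))) this

lemma fwd_resp (v v' : CommTuple A (m + 1)) (h : tupleConj A (m + 1) v v') :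
    fwd hT v = fwd hT v' := by
  obtain ⟨h0, hh⟩ := h
  have key : fwd hT v' = ⟨⟨sel hT (v.1 0), sel_mem hT _⟩, Quot.mk _ (fwdTup hT v)⟩ := by
    apply fwd_eq_mk hT (sel_mem hT _) (selg hT (v.1 0) * h0⁻¹)
    · rw [← cj_cj, cj_inv_eq (hh 0), selg_spec]
    · intro i
      rw [← cj_cj, cj_inv_eq (hh i.succ)]
      rfl
  rw [key]; rfl

/-- Extend a commuting `m`-tuple in the centralizer of `a` by `a` itself. -/
def consT (a : A) (w : CentCommTuple A a m) : CommTuple A (m + 1) :=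
  ⟨Fin.cons a w.1, by
    intro i j
    refine Fin.cases ?_ ?_ i <;> [skip; intro i'] <;>
      refine Fin.cases ?_ ?_ j <;> [skip; intro j'; skip; intro j'] <;>
      simp only [Fin.cons_zero, Fin.cons_succ]
    · exact Commute.refl a
    · exact w.2.1 j'
    · exact (w.2.1 i').symm
    · exact w.2.2 i' j'⟩

lemma consT_resp (a : A) (w w' : CentCommTuple A a m)
    (h : centTupleConj A a m w w') :
    Quot.mk (tupleConj A (m + 1)) (consT a w) = Quot.mk _ (consT a w') := by
  obtain ⟨g, hg, hw⟩ := h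
  apply Quot.sound
  refine ⟨g, fun i => ?_⟩
  refine Fin.cases ?_ ?_ i
  · show cj g ((consT a w).1 0) = (consT a w').1 0
    show cj g a = a
    exact cj_eq_of_commute hg
  · intro i'
    show cj g ((consT a w).1 i'.succ) = (consT a w').1 i'.succ
    show cj g (w.1 i') = w'.1 i'
    exact hw i'

noncomputable def keyEquiv :
    Quot (tupleConj A (m + 1)) ≃ Σ a : T, Quot (centTupleConj A (a : A) m) where
  toFun := Quot.lift (fwd hT) (fwd_resp hT)
  invFun p := Quot.lift (fun w => Quot.mk _ (consT (p.1 : A) w)) (consT_resp _) p.2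
  left_inv := by
    refine Quot.ind fun v => ?_
    show Quot.mk _ (consT (sel hT (v.1 0)) (fwdTup hT v)) = Quot.mk _ v
    symm
    apply Quot.sound
    refine ⟨selg hT (v.1 0), fun i => ?_⟩
    refine Fin.cases ?_ ?_ i
    · show cj (selg hT (v.1 0)) (v.1 0) = (consT _ (fwdTup hT v)).1 0
      show cj (selg hT (v.1 0)) (v.1 0) = sel hT (v.1 0)
      exact selg_spec hT _
    · intro i'
      show cj (selg hT (v.1 0)) (v.1 i'.succ) = (consT _ (fwdTup hT v)).1 i'.succ
      rfl
  right_inv := by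
    rintro ⟨⟨a, ha⟩, q⟩
    induction q using Quot.ind with
    | _ w =>
      show Quot.lift (fwd hT) (fwd_resp hT) (Quot.mk _ (consT a w)) = _
      show fwd hT (consT a w) = _
      apply fwd_eq_mk hT ha 1
      · show cj 1 ((consT a w).1 0) = a
        rw [cj_one]; rfl
      · intro i
        show cj 1 ((consT a w).1 i.succ) = w.1 i
        rw [cj_one]; rfl

lemma natCard_sigma {ι : Type} [Fintype ι] {f : ι → Type} [∀ i, Finite (f i)] :
    Nat.card (Σ i, f i) = ∑ i, Nat.card (f i) := by
  letI : ∀ i, Fintype (f i) := fun i => Fintype.ofFinite _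
  rw [Nat.card_eq_fintype_card, Fintype.card_sigma]
  exact Finset.sum_congr rfl fun i _ => Nat.card_eq_fintype_card.symm

end OrbitRec

/-- The recursion `c_{A,k} = ∑_Z s_Z c_{Z,k−1}`: summing over a transversal `T` of the
conjugacy classes of `A` (which groups into isomorphism classes of centralizer
subalgebras, with `s_Z` classes having centralizer isomorphic to `Z`), the number of
orbits of `A*` on commuting `k`-tuples equals the sum over `a ∈ T` of the number of
orbits of `Z_{A*}(a)` on commuting `(k−1)`-tuples in `Z_A(a)`. -/
theorem orbit_count_recursion (F : Type) [Field F] [Fintype F]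
    (A : Type) [Ring A] [Algebra F A] [FiniteDimensional F A] [Fintype A]
    (k : ℕ) (hk : 1 ≤ k) (T : Finset A)
    (hT : ∀ b : A, ∃! a : A, a ∈ T ∧ ∃ g : Aˣ, (g : A) * b * ((g⁻¹ : Aˣ) : A) = a) :
    Nat.card (Quot (tupleConj A k)) =
      ∑ a ∈ T, Nat.card (Quot (centTupleConj A a (k - 1))) := by
  obtain ⟨m, rfl⟩ : ∃ m, k = m + 1 := ⟨k - 1, (Nat.succ_pred_eq_of_pos hk).symm⟩
  simp only [Nat.succ_sub_one]
  rw [Nat.card_congr (OrbitRec.keyEquiv hT), OrbitRec.natCard_sigma]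
  exact Finset.sum_coe_sort T (fun x => Nat.card (Quot (centTupleConj A x m)))
end

section
/- The generating function h_A(t) = 1 + ∑_{k≥1} c_{A,k} t^k is a rational function of t, for any finite-dimensional algebra A over a finite field 𝔽_q. -/
/-!
Since `A` is finite, Burnside's lemma gives `c_{A,k} = |A*|⁻¹ ∑_g N_g(k)`, where `N_g(k)` counts
the commuting `k`-tuples fixed by conjugation by `g`. Such a tuple is just a map `Fin k → A` whose
image is a set of pairwise commuting `g`-fixed elements, and the number of maps with image exactly
`S` is, by Möbius inversion of `∑_{T ⊆ S} #{v | image v = T} = |S|^k`, a combination of the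
geometric sequences `k ↦ |T|^k`. So `k ↦ c_{A,k}` lies in the span of geometric sequences, whose
generating functions `1 / (1 - m t)` are rational.
-/

open Polynomial Finset

section RationalGenFun

lemma one_sub_C_mul_X_mul_mk_pow {R : Type*} [CommRing R] (r : R) :
    (1 - PowerSeries.C r * PowerSeries.X) * PowerSeries.mk (r ^ ·) = 1 := by
  ext n
  rw [sub_mul, one_mul, mul_assoc, map_sub, PowerSeries.coeff_C_mul]
  cases n with
  | zero => simp
  | succ n => simp [PowerSeries.coeff_succ_X_mul, pow_succ, mul_comm]

variable (R : Type*) [CommRing R] [IsDomain R]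

def rationalGenFun : Submodule R (ℕ → R) where
  carrier := {c | ∃ P Q : R[X], Q.coeff 0 ≠ 0 ∧ (Q : PowerSeries R) * PowerSeries.mk c = P}
  zero_mem' := ⟨0, 1, by simp, by ext; simp⟩
  add_mem' := by
    rintro c d ⟨P, Q, hQ, h⟩ ⟨P', Q', hQ', h'⟩
    refine ⟨P * Q' + Q * P', Q * Q', by simp [mul_coeff_zero, hQ, hQ'], ?_⟩
    have hmk : PowerSeries.mk (c + d) = PowerSeries.mk c + PowerSeries.mk d := by ext; simp
    push_cast
    rw [hmk, ← h, ← h']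
    ring
  smul_mem' := by
    rintro r c ⟨P, Q, hQ, h⟩
    refine ⟨C r * P, Q, hQ, ?_⟩
    have hmk : PowerSeries.mk (r • c) = PowerSeries.C r * PowerSeries.mk c := by ext; simp
    push_cast
    rw [hmk, ← h]
    ring

def geomSpan : Submodule R (ℕ → R) :=
  Submodule.span R (Set.range fun (r : R) (k : ℕ) => r ^ k)

lemma geomSpan_le_rationalGenFun : geomSpan R ≤ rationalGenFun R := by
  refine Submodule.span_le.2 ?_
  rintro _ ⟨r, rfl⟩
  refine ⟨1, 1 - C r * X, by simp, ?_⟩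
  push_cast
  exact one_sub_C_mul_X_mul_mk_pow r

end RationalGenFun

section Counting

variable {X : Type*} [Fintype X] [DecidableEq X]

lemma card_image_subset_eq_pow (S : Finset X) (k : ℕ) :
    #{v : Fin k → X | univ.image v ⊆ S} = #S ^ k := by
  rw [← Fintype.card_piFinset_const]
  congr 1
  ext v
  simp [image_subset_iff]

lemma sum_card_image_eq_pow (S : Finset X) (k : ℕ) :
    ∑ T ∈ S.powerset, #{v : Fin k → X | univ.image v = T} = #S ^ k := by
  rw [sum_card_fiberwise_eq_card_filter, ← card_image_subset_eq_pow]
  simp only [mem_powerset]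

lemma card_image_eq_mem_geomSpan (S : Finset X) :
    (fun k => (#{v : Fin k → X | univ.image v = S} : ℚ)) ∈ geomSpan ℚ := by
  induction S using Finset.strongInduction with
  | H S ih =>
    have hS : (fun k => (#{v : Fin k → X | univ.image v = S} : ℚ)) =
        (fun k => (#S : ℚ) ^ k) -
          ∑ T ∈ S.ssubsets, fun k => (#{v : Fin k → X | univ.image v = T} : ℚ) := by
      funext k
      have h := sum_card_image_eq_pow S k
      rw [← sum_erase_add _ _ (mem_powerset_self S)] at h
      rw [Pi.sub_apply, Finset.sum_apply, eq_sub_iff_add_eq']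
      exact_mod_cast h
    rw [hS]
    exact sub_mem (Submodule.subset_span ⟨_, rfl⟩)
      (Submodule.sum_mem _ fun T hT => ih T (mem_ssubsets.1 hT))

lemma card_image_mem_geomSpan (p : Finset X → Prop) [DecidablePred p] :
    (fun k => (#{v : Fin k → X | p (univ.image v)} : ℚ)) ∈ geomSpan ℚ := by
  have h : (fun k => (#{v : Fin k → X | p (univ.image v)} : ℚ)) =
      ∑ S ∈ univ.filter p, fun k => (#{v : Fin k → X | univ.image v = S} : ℚ) := by
    funext k
    rw [Finset.sum_apply]
    exact_mod_cast by simp [sum_card_fiberwise_eq_card_filter]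
  rw [h]
  exact Submodule.sum_mem _ fun S _ => card_image_eq_mem_geomSpan S

end Counting

lemma natCard_pairwise_mem_geomSpan {X : Type*} [Finite X] (r : X → X → Prop) :
    (fun k => (Nat.card {v : Fin k → X // ∀ i j, r (v i) (v j)} : ℚ)) ∈ geomSpan ℚ := by
  classical
  have := Fintype.ofFinite X
  convert card_image_mem_geomSpan (fun S : Finset X => ∀ a ∈ S, ∀ b ∈ S, r a b) using 3 with k
  rw [Nat.card_eq_fintype_card, Fintype.card_subtype]
  simp

lemma MulAction.sum_natCard_fixedBy_eq_natCard_orbits_mul_natCard (G X : Type*) [Group G]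
    [MulAction G X] [Fintype G] [Finite X] :
    ∑ g : G, Nat.card (fixedBy X g) = Nat.card (orbitRel.Quotient G X) * Nat.card G := by
  rw [← Nat.card_sigma, Nat.card_congr (sigmaFixedByEquivOrbitsProdGroup G X), Nat.card_prod]

namespace CommTuple

variable {A : Type} [Ring A] {k : ℕ}

lemma ext_iff {v w : CommTuple A k} : v = w ↔ ∀ i, v.1 i = w.1 i :=
  Subtype.ext_iff.trans funext_iff

instance : MulAction Aˣ (CommTuple A k) where
  smul g v := ⟨fun i => ConjAct.toConjAct g • v.1 i,
    fun i j => (v.2 i j).map (MulDistribMulAction.toMonoidHom A (ConjAct.toConjAct g))⟩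
  one_smul v := ext_iff.2 fun i => by
    change ConjAct.toConjAct 1 • v.1 i = v.1 i
    rw [map_one, one_smul]
  mul_smul g h v := ext_iff.2 fun i => by
    change ConjAct.toConjAct (g * h) • v.1 i = ConjAct.toConjAct g • ConjAct.toConjAct h • v.1 i
    rw [map_mul, mul_smul]

lemma smul_val (g : Aˣ) (v : CommTuple A k) (i : Fin k) :
    (g • v).1 i = g * v.1 i * ↑g⁻¹ := ConjAct.units_smul_def _ _

instance [Finite A] : Finite (CommTuple A k) := Subtype.finite

lemma natCard_quot_tupleConj :
    Nat.card (Quot (tupleConj A k)) =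
      Nat.card (MulAction.orbitRel.Quotient Aˣ (CommTuple A k)) := by
  have h : tupleConj A k = MulAction.orbitRel Aˣ (CommTuple A k) := by
    ext v w
    rw [MulAction.orbitRel_apply, MulAction.mem_orbit_symm, MulAction.mem_orbit_iff]
    simp [tupleConj, ext_iff, smul_val]
  rw [h]
  rfl

lemma natCard_fixedBy (g : Aˣ) :
    Nat.card (MulAction.fixedBy (CommTuple A k) g) =
      Nat.card {v : Fin k → A // ∀ i j, Commute (v i) (v j) ∧ g * v i * ↑g⁻¹ = v i} := by
  have e₁ : MulAction.fixedBy (CommTuple A k) g ≃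
      {v : CommTuple A k // ∀ i, g * v.1 i * ↑g⁻¹ = v.1 i} :=
    Equiv.subtypeEquivRight fun v => by simp [MulAction.mem_fixedBy, ext_iff, smul_val]
  have e₂ : {v : CommTuple A k // ∀ i, g * v.1 i * ↑g⁻¹ = v.1 i} ≃
      {v : Fin k → A // (∀ i j, Commute (v i) (v j)) ∧ ∀ i, g * v i * ↑g⁻¹ = v i} :=
    Equiv.subtypeSubtypeEquivSubtypeInter (fun v : Fin k → A => ∀ i j, Commute (v i) (v j))
      (fun v => ∀ i, g * v i * ↑g⁻¹ = v i)
  refine Nat.card_congr (e₁.trans (e₂.trans (Equiv.subtypeEquivRight fun v => ?_)))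
  exact ⟨fun h i j => ⟨h.1 i j, h.2 i⟩, fun h => ⟨fun i j => (h i j).1, fun i => (h i i).2⟩⟩

end CommTuple

lemma natCard_quot_tupleConj_mem_geomSpan (A : Type) [Ring A] [Finite A] :
    (fun k => (Nat.card (Quot (tupleConj A k)) : ℚ)) ∈ geomSpan ℚ := by
  have := Fintype.ofFinite Aˣ
  have hG : (Nat.card Aˣ : ℚ) ≠ 0 := Nat.cast_ne_zero.2 Nat.card_pos.ne'
  have h : (fun k => (Nat.card (Quot (tupleConj A k)) : ℚ)) = (Nat.card Aˣ : ℚ)⁻¹ •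
      ∑ g : Aˣ, fun k =>
        (Nat.card {v : Fin k → A // ∀ i j, Commute (v i) (v j) ∧ g * v i * ↑g⁻¹ = v i} : ℚ) := by
    funext k
    rw [Pi.smul_apply, Finset.sum_apply, smul_eq_mul, eq_inv_mul_iff_mul_eq₀ hG]
    simp_rw [← CommTuple.natCard_fixedBy]
    rw [CommTuple.natCard_quot_tupleConj, mul_comm]
    exact_mod_cast
      (MulAction.sum_natCard_fixedBy_eq_natCard_orbits_mul_natCard Aˣ (CommTuple A k)).symm
  rw [h]
  exact Submodule.smul_mem _ _ (Submodule.sum_mem _ fun g _ =>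
    natCard_pairwise_mem_geomSpan fun a b : A => Commute a b ∧ g * a * ↑g⁻¹ = a)

/-- For any finite-dimensional algebra `A` over a finite field, the generating function
`h_A(t) = 1 + ∑_{k≥1} c_{A,k} tᵏ` of the numbers of simultaneous similarity classes of
commuting `k`-tuples is a rational function of `t`: there are polynomials `P, Q` with
`Q(0) ≠ 0` and `Q·h_A = P` as formal power series. (Note `c_{A,0} = 1`.) -/
theorem genfun_rational (F : Type) [Field F] [Fintype F]
    (A : Type) [Ring A] [Algebra F A] [FiniteDimensional F A] :
    ∃ P Q : Polynomial ℚ, Q.coeff 0 ≠ 0 ∧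
      (Q : PowerSeries ℚ) * (PowerSeries.mk fun k => (Nat.card (Quot (tupleConj A k)) : ℚ)) =
        (P : PowerSeries ℚ) := by
  have : Finite A := Module.finite_of_finite F
  exact geomSpan_le_rationalGenFun ℚ (natCard_quot_tupleConj_mem_geomSpan A)
end
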